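/- Assume C is semiprime. If t ∈ C is pure, then ρ(t) = t; in particular, ρ(a) = a for every complemented element a ∈ C. -/

import Mathlib

open CompleteLattice

/-- A complete lattice equipped with a commutator operation, axiomatizing the congruence
lattice of an algebra in a semidegenerate congruence-modular variety whose compact
congruences are closed under the commutator. -/
class CommutatorLattice (C : Type*) [CompleteLattice C] where
  comm : C → C → C
  comm_comm : ∀ a b : C, comm a b = comm b a
  comm_sSup : ∀ (s : Set C) (b : C), comm (sSup s) b = ⨆ a ∈ s, comm a b
  comm_le_inf : ∀ a b : C, comm a b ≤ a ⊓ b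
  comm_top : ∀ a : C, comm a ⊤ = a
  compactlyGenerated : ∀ x : C,
    ∃ s : Set C, (∀ a ∈ s, IsCompactElement a) ∧ sSup s = x
  top_isCompact : IsCompactElement (⊤ : C)
  comm_isCompact : ∀ a b : C, IsCompactElement a → IsCompactElement b →
    IsCompactElement (comm a b)

namespace CommutatorLattice

variable {C : Type*} [CompleteLattice C] [CommutatorLattice C]

/-- The residuation `a → b := ⨆ {c | [a,c] ≤ b}`. -/
def resid (a b : C) : C := sSup {c : C | comm a c ≤ b}

/-- The annihilator `a⊥ := a → ⊥`. -/
def ann (a : C) : C := resid a ⊥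

/-- Iterated commutator: `cpow a n = [a,a]^n`, with the convention `[a,a]^0 = a`.
Note that `[a,b]^n` for `n ≥ 1` equals `cpow (comm a b) (n-1)`. -/
def cpow (a : C) : ℕ → C
  | 0 => a
  | n + 1 => comm (cpow a n) (cpow a n)

/-- Prime elements: `p ≠ ⊤` and `[a,b] ≤ p` implies `a ≤ p` or `b ≤ p`. -/
def IsPrime (p : C) : Prop := p ≠ ⊤ ∧ ∀ a b : C, comm a b ≤ p → a ≤ p ∨ b ≤ p

/-- The radical `ρ(a) := ⨅ {p prime | a ≤ p}`. -/
def radical (a : C) : C := sInf {p : C | IsPrime p ∧ a ≤ p}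

variable (C) in
/-- `C` is semiprime if `ρ(⊥) = ⊥`. -/
def Semiprime : Prop := radical (⊥ : C) = ⊥

variable (C) in
/-- Condition (⋆): for all compact `a`, `b` and all `n ≥ 1` there is `m ≥ 0` with
`[[a,a]^m, [b,b]^m] ≤ [a,b]^n`.  Here `cpow (comm a b) n = [a,b]^(n+1)`, so `n : ℕ`
ranges exactly over the exponents `≥ 1` of the paper. -/
def Star : Prop := ∀ a b : C, IsCompactElement a → IsCompactElement b →
  ∀ n : ℕ, ∃ m : ℕ, comm (cpow a m) (cpow b m) ≤ cpow (comm a b) n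

/-- Pure elements: `t ⊔ a⊥ = ⊤` for every compact `a ≤ t`. -/
def IsPure (t : C) : Prop := ∀ a : C, IsCompactElement a → a ≤ t → t ⊔ ann a = ⊤

/-- w-pure elements: `t ⊔ (a → ρ(⊥)) = ⊤` for every compact `a ≤ t`. -/
def IsWPure (t : C) : Prop :=
  ∀ a : C, IsCompactElement a → a ≤ t → t ⊔ resid a (radical ⊥) = ⊤

/-- Complemented elements. -/
def IsComplEl (a : C) : Prop := ∃ b : C, a ⊔ b = ⊤ ∧ a ⊓ b = ⊥

/-- Regular elements: joins of sets of complemented elements. -/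
def IsRegular (t : C) : Prop := ∃ S : Set C, (∀ a ∈ S, IsComplEl a) ∧ t = sSup S

/-- Max-regular elements: maximal among regular elements distinct from `⊤`. -/
def IsMaxRegular (t : C) : Prop :=
  IsRegular t ∧ t ≠ ⊤ ∧ ∀ u : C, IsRegular u → u ≠ ⊤ → t ≤ u → u = t

/-- Maximal elements of `C \ {⊤}`. -/
def IsMaximal (p : C) : Prop := p ≠ ⊤ ∧ ∀ q : C, q ≠ ⊤ → p ≤ q → q = p

/-- Minimal primes. -/
def IsMinPrime (p : C) : Prop := IsPrime p ∧ ∀ q : C, IsPrime q → q ≤ p → q = p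

variable (C) in
/-- `C` is mp if every prime lies above a unique minimal prime. -/
def MP : Prop := ∀ p : C, IsPrime p → ∃! q : C, IsMinPrime q ∧ q ≤ p

variable (C) in
/-- `C` is PF if `a⊥` is pure for every compact `a`. -/
def PF : Prop := ∀ a : C, IsCompactElement a → IsPure (ann a)

variable (C) in
/-- `C` is PP if `a⊥` is complemented for every compact `a`. -/
def PP : Prop := ∀ a : C, IsCompactElement a → IsComplEl (ann a)

/-- `O(p) := ⨆ {a compact | a⊥ ≰ p}`. -/
def O (p : C) : C := sSup {a : C | IsCompactElement a ∧ ¬ ann a ≤ p}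

variable (C) in
/-- `C` is normal. -/
def Normal : Prop := ∀ t u : C, t ⊔ u = ⊤ →
  ∃ a b : C, t ⊔ a = ⊤ ∧ u ⊔ b = ⊤ ∧ comm a b = ⊥

variable (C) in
/-- `C` is B-normal. -/
def BNormal : Prop := ∀ t u : C, t ⊔ u = ⊤ →
  ∃ a b : C, IsComplEl a ∧ IsComplEl b ∧ t ⊔ a = ⊤ ∧ u ⊔ b = ⊤ ∧ comm a b = ⊥

variable (C) in
/-- `C` is purified. -/
def Purified : Prop := ∀ p q : C, IsMinPrime p → IsMinPrime q → p ≠ q →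
  ∃ a : C, IsComplEl a ∧ a ≤ p ∧ ann a ≤ q

variable (C) in
/-- The prime spectrum of `C`. -/
abbrev Spec := {p : C // IsPrime p}

variable (C) in
/-- The Zariski topology on `Spec C`: the closed sets are the `V(t) = {p | t ≤ p}`,
equivalently the topology generated by the sets `D(t) = {p | t ≰ p}`. -/
def zariskiTop : TopologicalSpace (Spec C) :=
  TopologicalSpace.generateFrom {U : Set (Spec C) | ∃ t : C, U = {p : Spec C | ¬ t ≤ p.1}}

variable (C) in
/-- The flat topology on `Spec C`: generated by the open basis `V(a)`, `a` compact. -/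
def flatTop : TopologicalSpace (Spec C) :=
  TopologicalSpace.generateFrom
    {U : Set (Spec C) | ∃ a : C, IsCompactElement a ∧ U = {p : Spec C | a ≤ p.1}}

/-!
If `t` is pure, every compact `c ≤ ρ(t)` has an iterated commutator `[c,c]^n ≤ t`: otherwise a
maximal element above `t` avoiding all `[c,c]^n` (Zorn, using compactness of the `[c,c]^n`) is a
prime containing `t` but not `c`. The iterates are then peeled off one at a time: if `[d,d] ≤ t`
with `d` compact, purity gives `t ⊔ [d,d]⊥ = ⊤`, and `[d,[d,d]⊥]` lies in every prime, hence in
`ρ(⊥) = ⊥`, so `d = [d, t ⊔ [d,d]⊥] ≤ t`. Complemented elements are pure.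
-/

lemma comm_sup_left (a b c : C) : comm (a ⊔ b) c = comm a c ⊔ comm b c := by
  rw [← sSup_pair, comm_sSup, iSup_insert, iSup_singleton]

lemma comm_sup_right (a b c : C) : comm a (b ⊔ c) = comm a b ⊔ comm a c := by
  rw [comm_comm, comm_sup_left, comm_comm b, comm_comm c]

lemma comm_mono {a b a' b' : C} (ha : a ≤ a') (hb : b ≤ b') : comm a b ≤ comm a' b' :=
  calc comm a b ≤ comm (a ⊔ a') b := by rw [comm_sup_left]; exact le_sup_left
    _ = comm a' b := by rw [sup_eq_right.mpr ha]
    _ ≤ comm a' (b ⊔ b') := by rw [comm_sup_right]; exact le_sup_left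
    _ = comm a' b' := by rw [sup_eq_right.mpr hb]

lemma comm_le_left (a b : C) : comm a b ≤ a := (comm_le_inf a b).trans inf_le_left

lemma comm_le_right (a b : C) : comm a b ≤ b := (comm_le_inf a b).trans inf_le_right

lemma comm_sup_sup_le (p a b : C) : comm (p ⊔ a) (p ⊔ b) ≤ p ⊔ comm a b := by
  rw [comm_sup_left, comm_sup_right, comm_sup_right]
  exact sup_le
    (sup_le (le_sup_of_le_left (comm_le_left _ _)) (le_sup_of_le_left (comm_le_left _ _)))
    (sup_le (le_sup_of_le_left (comm_le_right _ _)) le_sup_right)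

lemma comm_ann (a : C) : comm a (ann a) = ⊥ := by
  refine le_bot_iff.mp ?_
  rw [ann, resid, comm_comm, comm_sSup]
  exact iSup₂_le fun c hc => (comm_comm c a).trans_le hc

lemma le_ann_of_comm_eq_bot {a b : C} (h : comm a b = ⊥) : b ≤ ann a := le_sSup h.le

lemma isCompactElement_cpow {a : C} (ha : IsCompactElement a) (n : ℕ) :
    IsCompactElement (cpow a n) := by
  induction n with
  | zero => exact ha
  | succ n ih => exact comm_isCompact _ _ ih ih

lemma cpow_antitone (a : C) : Antitone (cpow a) :=
  antitone_nat_of_succ_le fun n => comm_le_left (cpow a n) (cpow a n)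

lemma IsPrime.comm_le_iff {p : C} (hp : IsPrime p) {a b : C} :
    comm a b ≤ p ↔ a ≤ p ∨ b ≤ p :=
  ⟨hp.2 a b, fun h => h.elim (comm_le_left a b).trans (comm_le_right a b).trans⟩

lemma le_radical (t : C) : t ≤ radical t := le_sInf fun _ hp => hp.2

lemma comm_le_radical_of_comm_comm_self_le {d e t : C} (h : comm (comm d d) e ≤ t) :
    comm d e ≤ radical t := by
  refine le_sInf fun p ⟨hp, htp⟩ => ?_
  have hdep := h.trans htp
  rw [hp.comm_le_iff, hp.comm_le_iff, or_self] at hdep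
  exact hp.comm_le_iff.mpr hdep

lemma isPrime_of_maximal_not_cpow_le {c t p : C}
    (hp : Maximal (fun x => t ≤ x ∧ ∀ n, ¬ cpow c n ≤ x) p) : IsPrime p := by
  refine ⟨fun hpt => hp.1.2 0 (hpt ▸ le_top), fun a b hab => ?_⟩
  by_contra! ⟨ha, hb⟩
  have reach : ∀ x, ¬ x ≤ p → ∃ n, cpow c n ≤ p ⊔ x := by
    intro x hx
    by_contra! hn
    exact hx (le_sup_right.trans (hp.2 ⟨hp.1.1.trans le_sup_left, hn⟩ le_sup_left))
  obtain ⟨n, hn⟩ := reach a ha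
  obtain ⟨m, hm⟩ := reach b hb
  apply hp.1.2 (max n m + 1)
  calc cpow c (max n m + 1) = comm (cpow c (max n m)) (cpow c (max n m)) := rfl
    _ ≤ comm (p ⊔ a) (p ⊔ b) :=
        comm_mono ((cpow_antitone c (le_max_left n m)).trans hn)
          ((cpow_antitone c (le_max_right n m)).trans hm)
    _ ≤ p ⊔ comm a b := comm_sup_sup_le p a b
    _ ≤ p := sup_le le_rfl hab

lemma exists_isPrime_of_forall_not_cpow_le {c t : C} (hc : IsCompactElement c)
    (h : ∀ n, ¬ cpow c n ≤ t) : ∃ p, IsPrime p ∧ t ≤ p ∧ ¬ c ≤ p := by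
  set S : Set C := {x | t ≤ x ∧ ∀ n, ¬ cpow c n ≤ x}
  have chain_bdd : ∀ s ⊆ S, IsChain (· ≤ ·) s → ∀ y ∈ s, ∃ ub ∈ S, ∀ z ∈ s, z ≤ ub := by
    intro s hs hchain y hy
    refine ⟨sSup s, ⟨(hs hy).1.trans (le_sSup hy), fun n hn => ?_⟩, fun z hz => le_sSup hz⟩
    obtain ⟨x, hx, hle⟩ := (isCompactElement_iff_le_of_directed_sSup_le C _).mp
      (isCompactElement_cpow hc n) s ⟨y, hy⟩ hchain.directedOn hn
    exact (hs hx).2 n hle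
  obtain ⟨p, -, hp⟩ := zorn_le_nonempty₀ S chain_bdd t ⟨le_rfl, h⟩
  exact ⟨p, isPrime_of_maximal_not_cpow_le hp, hp.1.1, hp.1.2 0⟩

lemma exists_cpow_le_of_le_radical {c t : C} (hc : IsCompactElement c) (h : c ≤ radical t) :
    ∃ n, cpow c n ≤ t := by
  by_contra! hno
  obtain ⟨p, hp, htp, hcp⟩ := exists_isPrime_of_forall_not_cpow_le hc hno
  exact hcp (h.trans (sInf_le ⟨hp, htp⟩))

lemma Semiprime.comm_eq_bot_of_comm_comm_self_eq_bot (hC : Semiprime C) {d e : C}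
    (h : comm (comm d d) e = ⊥) : comm d e = ⊥ :=
  le_bot_iff.mp (hC ▸ comm_le_radical_of_comm_comm_self_le h.le)

lemma IsPure.le_of_comm_self_le (hC : Semiprime C) {t d : C} (ht : IsPure t)
    (hd : IsCompactElement d) (hdd : comm d d ≤ t) : d ≤ t := by
  have hcover : t ⊔ ann (comm d d) = ⊤ := ht _ (comm_isCompact d d hd hd) hdd
  have hkill : comm d (ann (comm d d)) = ⊥ :=
    hC.comm_eq_bot_of_comm_comm_self_eq_bot (comm_ann _)
  calc d = comm d (t ⊔ ann (comm d d)) := by rw [hcover, comm_top]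
    _ = comm d t := by rw [comm_sup_right, hkill, sup_bot_eq]
    _ ≤ t := comm_le_right d t

lemma IsPure.le_of_cpow_le (hC : Semiprime C) {t d : C} (ht : IsPure t)
    (hd : IsCompactElement d) {n : ℕ} (h : cpow d n ≤ t) : d ≤ t := by
  induction n with
  | zero => exact h
  | succ n ih => exact ih (ht.le_of_comm_self_le hC (isCompactElement_cpow hd n) h)

lemma IsPure.radical_eq (hC : Semiprime C) {t : C} (ht : IsPure t) : radical t = t := by
  refine (le_radical t).antisymm' ?_
  obtain ⟨s, hs, hsup⟩ := compactlyGenerated (radical t)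
  rw [← hsup]
  refine sSup_le fun c hc => ?_
  obtain ⟨n, hn⟩ := exists_cpow_le_of_le_radical (hs c hc) ((le_sSup hc).trans hsup.le)
  exact ht.le_of_cpow_le hC (hs c hc) hn

lemma IsComplEl.isPure {a : C} (ha : IsComplEl a) : IsPure a := by
  obtain ⟨b, hsup, hinf⟩ := ha
  intro c _ hca
  have hb : b ≤ ann c := le_ann_of_comm_eq_bot <| le_bot_iff.mp <|
    hinf ▸ (comm_le_inf c b).trans (inf_le_inf_right b hca)
  exact top_le_iff.mp (hsup ▸ sup_le_sup_left hb a)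

theorem statement2 (h : Semiprime C) :
    (∀ t : C, IsPure t → radical t = t) ∧ ∀ a : C, IsComplEl a → radical a = a :=
  ⟨fun _ ht => ht.radical_eq h, fun _ ha => ha.isPure.radical_eq h⟩

end CommutatorLattice
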